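/- arXiv:2211.13556 — 3 statements merged into one kernel-verified Lean document; each statement's English description precedes it below -/
import Mathlib

section
/- Let N ≥ 1, α ∈ (0,N), p ≥ 1, and let Iₐ(x) = A_α/|x|^{N−α} be the Riesz kernel. The map u ↦ (∫_{ℝᴺ} |I_{α/2} ∗ |u|^p|² dx)^{1/(2p)} defines a norm on the space of measurable functions u : ℝᴺ → ℝᴺ for which this quantity is finite, and this Coulomb space Q^{α,p}(ℝᴺ, ℝᴺ) is complete with respect to it. -/
/-!
For fixed `x`, `(∫ k(x,y) f(y)^p dy)^{1/p}` is the `L^p` norm of `f` for the measure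
`k(x,·) dy`, and the Coulomb norm of `u` is the `L^{2p}` norm in `x` of this quantity for
`f = |u|`; Minkowski's inequality, applied once in each variable, gives the triangle inequality.

Completeness is the Riesz–Fischer argument: along a subsequence with
`‖u_{j+1} - u_j‖ < 2^{-j}`, Fatou's lemma (in both integrals) bounds the norm of
`∑ |u_{j+1} - u_j|`, and since the Riesz kernel is positive off the diagonal, a function of
finite Coulomb norm is finite a.e. Hence the subsequence converges a.e., and Fatou once more
turns the Cauchy bound into convergence in norm.
-/

open MeasureTheory ENNReal

/-- The Riesz kernel `I_γ(x) = Γ((N−γ)/2)/(Γ(γ/2) π^{N/2} 2^γ) · |x|^{−(N−γ)}` on `ℝᴺ`. -/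
noncomputable def rieszKernel (N : ℕ) (γ : ℝ) (x : EuclideanSpace ℝ (Fin N)) : ℝ :=
  (Real.Gamma (((N : ℝ) - γ) / 2) /
      (Real.Gamma (γ / 2) * Real.pi ^ ((N : ℝ) / 2) * (2 : ℝ) ^ γ)) *
    ‖x‖ ^ (-(((N : ℝ) - γ)))

/-- The Coulomb energy `∫ |I_{α/2} ∗ |u|^p|² dx` of a vector field `u : ℝᴺ → ℝᴺ`. -/
noncomputable def coulombEnergy (N : ℕ) (α p : ℝ)
    (u : EuclideanSpace ℝ (Fin N) → EuclideanSpace ℝ (Fin N)) : ℝ≥0∞ :=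
  ∫⁻ x, (∫⁻ y, ENNReal.ofReal (rieszKernel N (α / 2) (x - y)) * (‖u y‖₊ : ℝ≥0∞) ^ p) ^ 2

/-- The Coulomb norm `‖u‖_{Q^{α,p}} = (∫ |I_{α/2} ∗ |u|^p|² dx)^{1/(2p)}`. -/
noncomputable def coulombNorm (N : ℕ) (α p : ℝ)
    (u : EuclideanSpace ℝ (Fin N) → EuclideanSpace ℝ (Fin N)) : ℝ≥0∞ :=
  coulombEnergy N α p u ^ (1 / (2 * p))

open Filter Function Topology

section KernelNorm

variable {X : Type*} [MeasurableSpace X] (μ : Measure X) (k : X → X → ℝ≥0∞) (p : ℝ)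

noncomputable def kernelPotential (f : X → ℝ≥0∞) (x : X) : ℝ≥0∞ :=
  ∫⁻ y, k x y * f y ∂μ

noncomputable def kernelEnergy (f : X → ℝ≥0∞) : ℝ≥0∞ :=
  ∫⁻ x, kernelPotential μ k (fun y => f y ^ p) x ^ 2 ∂μ

noncomputable def kernelNorm (f : X → ℝ≥0∞) : ℝ≥0∞ :=
  kernelEnergy μ k p f ^ (1 / (2 * p))

variable {μ k p}

theorem kernelPotential_congr_ae {f g : X → ℝ≥0∞} (h : f =ᵐ[μ] g) :
    kernelPotential μ k f = kernelPotential μ k g :=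
  funext fun _ => lintegral_congr_ae (h.mono fun _ hy => by simp only [hy])

theorem kernelPotential_mono {f g : X → ℝ≥0∞} (h : f ≤ᵐ[μ] g) :
    kernelPotential μ k f ≤ kernelPotential μ k g :=
  fun _ => lintegral_mono_ae (h.mono fun _ hy => mul_le_mul_right hy _)

theorem measurable_kernelPotential [SFinite μ] (hk : Measurable (uncurry k)) {f : X → ℝ≥0∞}
    (hf : AEMeasurable f μ) : Measurable (kernelPotential μ k f) := by
  rw [kernelPotential_congr_ae hf.ae_eq_mk]
  exact (hk.mul (hf.measurable_mk.comp measurable_snd)).lintegral_prod_right'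

theorem kernelNorm_mono (hp : 0 < p) {f g : X → ℝ≥0∞} (h : f ≤ᵐ[μ] g) :
    kernelNorm μ k p f ≤ kernelNorm μ k p g := by
  have hpow : (fun y => f y ^ p) ≤ᵐ[μ] fun y => g y ^ p :=
    h.mono fun _ hy => rpow_le_rpow hy hp.le
  refine rpow_le_rpow (lintegral_mono fun x => ?_) (by positivity)
  exact pow_le_pow_left' (kernelPotential_mono hpow x) 2

theorem kernelNorm_zero (hp : 0 < p) : kernelNorm μ k p 0 = 0 := by
  simp [kernelNorm, kernelEnergy, kernelPotential, zero_rpow_of_pos hp, hp]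

theorem kernelNorm_le_iff (hp : 0 < p) {f : X → ℝ≥0∞} {C : ℝ≥0∞} :
    kernelNorm μ k p f ≤ C ↔ kernelEnergy μ k p f ≤ C ^ (2 * p) := by
  rw [kernelNorm, one_div, rpow_inv_le_iff (by positivity)]

theorem kernelNorm_ne_top_iff (hp : 0 < p) {f : X → ℝ≥0∞} :
    kernelNorm μ k p f ≠ ∞ ↔ kernelEnergy μ k p f ≠ ∞ := by
  rw [kernelNorm, Ne, rpow_eq_top_iff_of_pos (by positivity)]

theorem kernelNorm_eq_lintegral (hp : 0 < p) (f : X → ℝ≥0∞) :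
    kernelNorm μ k p f =
      (∫⁻ x, (kernelPotential μ k (fun y => f y ^ p) x ^ (1 / p)) ^ (2 * p) ∂μ) ^
        (1 / (2 * p)) := by
  have h2 : 1 / p * (2 * p) = 2 := by field_simp
  simp_rw [← rpow_mul, h2, rpow_two]
  rfl

theorem kernelPotential_rpow_add_le (hk : Measurable (uncurry k)) (hp : 1 ≤ p)
    {f g : X → ℝ≥0∞} (hf : AEMeasurable f μ) (hg : AEMeasurable g μ) (x : X) :
    kernelPotential μ k (fun y => (f y + g y) ^ p) x ^ (1 / p) ≤
      kernelPotential μ k (fun y => f y ^ p) x ^ (1 / p) +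
        kernelPotential μ k (fun y => g y ^ p) x ^ (1 / p) := by
  have hkx : AEMeasurable (k x) μ := (hk.comp measurable_prodMk_left).aemeasurable
  have hac := withDensity_absolutelyContinuous μ (k x)
  have hwd : ∀ {F : X → ℝ≥0∞}, AEMeasurable F μ →
      kernelPotential μ k F x = ∫⁻ y, F y ∂μ.withDensity (k x) :=
    fun hF => (lintegral_withDensity_eq_lintegral_mul₀ hkx hF).symm
  have h := lintegral_Lp_add_le (hf.mono_ac hac) (hg.mono_ac hac) hp
  rwa [← hwd ((hf.add hg).pow_const p), ← hwd (hf.pow_const p), ← hwd (hg.pow_const p)] at h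

theorem kernelNorm_add_le [SFinite μ] (hk : Measurable (uncurry k)) (hp : 1 ≤ p)
    {f g : X → ℝ≥0∞} (hf : AEMeasurable f μ) (hg : AEMeasurable g μ) :
    kernelNorm μ k p (f + g) ≤ kernelNorm μ k p f + kernelNorm μ k p g := by
  have hp0 : 0 < p := by linarith
  have hA : ∀ {h : X → ℝ≥0∞}, AEMeasurable h μ →
      AEMeasurable (fun x => kernelPotential μ k (fun y => h y ^ p) x ^ (1 / p)) μ :=
    fun hh => ((measurable_kernelPotential hk (hh.pow_const p)).pow_const _).aemeasurable
  simp only [kernelNorm_eq_lintegral hp0]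
  calc _ ≤ (∫⁻ x, (kernelPotential μ k (fun y => f y ^ p) x ^ (1 / p) +
          kernelPotential μ k (fun y => g y ^ p) x ^ (1 / p)) ^ (2 * p) ∂μ) ^ (1 / (2 * p)) := by
        gcongr with x
        exact kernelPotential_rpow_add_le hk hp hf hg x
    _ ≤ _ := lintegral_Lp_add_le (hA hf) (hA hg) (by linarith)

theorem kernelNorm_const_mul (hp : 0 < p) {c : ℝ≥0∞} (hc : c ≠ ∞) (f : X → ℝ≥0∞) :
    kernelNorm μ k p (fun y => c * f y) = c * kernelNorm μ k p f := by
  have hP : ∀ x, kernelPotential μ k (fun y => (c * f y) ^ p) x =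
      c ^ p * kernelPotential μ k (fun y => f y ^ p) x := by
    intro x
    simp only [kernelPotential, mul_rpow_of_nonneg _ _ hp.le, mul_left_comm _ (c ^ p)]
    exact lintegral_const_mul' _ _ (rpow_ne_top_of_nonneg hp.le hc)
  have hE : kernelEnergy μ k p (fun y => c * f y) = c ^ (2 * p) * kernelEnergy μ k p f := by
    simp only [kernelEnergy, hP, mul_pow]
    rw [lintegral_const_mul' _ _ (pow_ne_top (rpow_ne_top_of_nonneg hp.le hc)),
      ← rpow_natCast, ← rpow_mul, Nat.cast_two, mul_comm p]
  rw [kernelNorm, hE, mul_rpow_of_nonneg _ _ (by positivity), one_div,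
    rpow_rpow_inv (by positivity), kernelNorm, one_div]

theorem kernelEnergy_le_liminf [SFinite μ] (hk : Measurable (uncurry k))
    {f : X → ℝ≥0∞} {F : ℕ → X → ℝ≥0∞} (hF : ∀ n, AEMeasurable (F n) μ)
    (hlim : ∀ᵐ y ∂μ, Tendsto (fun n => F n y) atTop (𝓝 (f y))) :
    kernelEnergy μ k p f ≤ liminf (fun n => kernelEnergy μ k p (F n)) atTop := by
  have hpot : ∀ x, kernelPotential μ k (fun y => f y ^ p) x ≤
      liminf (fun n => kernelPotential μ k (fun y => F n y ^ p) x) atTop := by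
    intro x
    have hkx : Measurable (k x) := hk.comp measurable_prodMk_left
    calc _ ≤ ∫⁻ y, liminf (fun n => k x y * F n y ^ p) atTop ∂μ := by
          refine lintegral_mono_ae (hlim.mono fun y hy => ?_)
          rcases eq_or_ne (f y ^ p) 0 with h0 | h0
          · simp [h0]
          · exact (ENNReal.Tendsto.const_mul ((continuous_rpow_const.tendsto _).comp hy)
              (Or.inl h0)).liminf_eq.ge
      _ ≤ _ := lintegral_liminf_le' fun n => hkx.aemeasurable.mul ((hF n).pow_const p)
  have hsq : ∀ x, kernelPotential μ k (fun y => f y ^ p) x ^ 2 ≤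
      liminf (fun n => kernelPotential μ k (fun y => F n y ^ p) x ^ 2) atTop := fun x =>
    (pow_le_pow_left' (hpot x) 2).trans_eq <|
      Monotone.map_liminf_of_continuousAt (f := fun a : ℝ≥0∞ => a ^ 2)
        (fun _ _ h => pow_le_pow_left' h 2) _ (ENNReal.continuous_pow 2).continuousAt
  calc _ ≤ ∫⁻ x, liminf (fun n => kernelPotential μ k (fun y => F n y ^ p) x ^ 2) atTop ∂μ :=
        lintegral_mono hsq
    _ ≤ _ := lintegral_liminf_le' fun n =>
        ((measurable_kernelPotential hk ((hF n).pow_const p)).pow_const 2).aemeasurable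

theorem kernelNorm_le_of_tendsto [SFinite μ] (hk : Measurable (uncurry k)) (hp : 0 < p)
    {f : X → ℝ≥0∞} {F : ℕ → X → ℝ≥0∞} (hF : ∀ n, AEMeasurable (F n) μ)
    (hlim : ∀ᵐ y ∂μ, Tendsto (fun n => F n y) atTop (𝓝 (f y))) {C : ℝ≥0∞}
    (hC : ∀ᶠ n in atTop, kernelNorm μ k p (F n) ≤ C) : kernelNorm μ k p f ≤ C := by
  simp only [kernelNorm_le_iff hp] at hC ⊢
  exact (kernelEnergy_le_liminf hk hF hlim).trans (liminf_le_of_frequently_le' hC.frequently)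

theorem kernelNorm_sum_le [SFinite μ] (hk : Measurable (uncurry k)) (hp : 1 ≤ p)
    {f : ℕ → X → ℝ≥0∞} (hf : ∀ n, AEMeasurable (f n) μ) (s : Finset ℕ) :
    kernelNorm μ k p (∑ n ∈ s, f n) ≤ ∑ n ∈ s, kernelNorm μ k p (f n) :=
  Finset.le_sum_of_subadditive_on_pred _ (AEMeasurable · μ) (kernelNorm_zero (by linarith)).le
    (fun _ _ => kernelNorm_add_le hk hp) (fun _ _ => AEMeasurable.add) f fun n _ => hf n

theorem kernelNorm_tsum_le [SFinite μ] (hk : Measurable (uncurry k)) (hp : 1 ≤ p)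
    {f : ℕ → X → ℝ≥0∞} (hf : ∀ n, AEMeasurable (f n) μ) :
    kernelNorm μ k p (fun y => ∑' n, f n y) ≤ ∑' n, kernelNorm μ k p (f n) := by
  refine kernelNorm_le_of_tendsto hk (by linarith) (F := fun K => ∑ n ∈ Finset.range K, f n)
    (fun K => Finset.aemeasurable_sum _ fun n _ => hf n) (ae_of_all _ fun y => ?_)
    (Eventually.of_forall fun K => (kernelNorm_sum_le hk hp hf _).trans (ENNReal.sum_le_tsum _))
  simpa only [Finset.sum_apply] using ENNReal.tendsto_nat_tsum fun n => f n y

variable [SFinite μ] [NeZero μ]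

theorem kernelNorm_eq_zero_iff (hk : Measurable (uncurry k)) (hpos : ∀ x, ∀ᵐ y ∂μ, k x y ≠ 0)
    (hp : 0 < p) {f : X → ℝ≥0∞} (hf : AEMeasurable f μ) :
    kernelNorm μ k p f = 0 ↔ f =ᵐ[μ] 0 := by
  refine ⟨fun h => ?_, fun h => le_antisymm ((kernelNorm_mono hp h.le).trans_eq
    (kernelNorm_zero hp)) zero_le⟩
  rw [kernelNorm, rpow_eq_zero_iff_of_pos (by positivity), kernelEnergy,
    lintegral_eq_zero_iff ((measurable_kernelPotential hk (hf.pow_const p)).pow_const 2)] at h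
  obtain ⟨x, hx⟩ := h.exists
  have hkx : Measurable (k x) := hk.comp measurable_prodMk_left
  have hint := (lintegral_eq_zero_iff' (hkx.aemeasurable.mul (hf.pow_const p))).1
    (pow_eq_zero_iff two_ne_zero |>.1 hx)
  filter_upwards [hint, hpos x] with y hy hkxy
  exact (rpow_eq_zero_iff_of_pos hp).1 ((mul_eq_zero.1 hy).resolve_left hkxy)

theorem ae_lt_top_of_kernelNorm_ne_top (hk : Measurable (uncurry k))
    (hpos : ∀ x, ∀ᵐ y ∂μ, k x y ≠ 0) (hp : 0 < p) {f : X → ℝ≥0∞} (hf : AEMeasurable f μ)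
    (h : kernelNorm μ k p f ≠ ∞) : ∀ᵐ y ∂μ, f y < ∞ := by
  rw [kernelNorm_ne_top_iff hp, kernelEnergy] at h
  obtain ⟨x, hx⟩ :=
    (ae_lt_top ((measurable_kernelPotential hk (hf.pow_const p)).pow_const 2) h).exists
  have hkx : Measurable (k x) := hk.comp measurable_prodMk_left
  have hint := ae_lt_top' (hkx.aemeasurable.mul (hf.pow_const p))
    ((pow_lt_top_iff.1 hx).resolve_right two_ne_zero).ne
  filter_upwards [hint, hpos x] with y hy hkxy
  exact (rpow_lt_top_iff_of_pos hp).1 (lt_top_of_mul_ne_top_right hy.ne hkxy)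

variable {E : Type*} [NormedAddCommGroup E]

theorem ae_tendsto_of_tsum_kernelNorm_ne_top [CompleteSpace E] (hk : Measurable (uncurry k))
    (hpos : ∀ x, ∀ᵐ y ∂μ, k x y ≠ 0) (hp : 1 ≤ p) {u : ℕ → X → E}
    (hu : ∀ n, AEMeasurable (fun y => ‖u (n + 1) y - u n y‖ₑ) μ)
    (hsum : ∑' n, kernelNorm μ k p (fun y => ‖u (n + 1) y - u n y‖ₑ) ≠ ∞) :
    ∀ᵐ y ∂μ, ∃ l, Tendsto (fun n => u n y) atTop (𝓝 l) := by
  have hG := ne_top_of_le_ne_top hsum (kernelNorm_tsum_le hk hp hu)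
  filter_upwards [ae_lt_top_of_kernelNorm_ne_top hk hpos (by linarith) (AEMeasurable.tsum hu) hG]
    with y hy
  refine cauchySeq_tendsto_of_complete (cauchySeq_of_edist_le_of_tsum_ne_top _ (fun n => ?_) hy.ne)
  rw [edist_comm, edist_eq_enorm_sub]

theorem exists_tendsto_kernelNorm_sub [CompleteSpace E] [MeasurableSpace E] [BorelSpace E]
    [SecondCountableTopology E] (hk : Measurable (uncurry k)) (hpos : ∀ x, ∀ᵐ y ∂μ, k x y ≠ 0)
    (hp : 1 ≤ p) {u : ℕ → X → E} (hu : ∀ n, AEMeasurable (u n) μ)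
    (hcauchy : ∀ ε > 0, ∃ n₀, ∀ m n, n₀ ≤ m → n₀ ≤ n →
      kernelNorm μ k p (fun y => ‖u m y - u n y‖ₑ) < ε) :
    ∃ v, AEMeasurable v μ ∧
      Tendsto (fun n => kernelNorm μ k p (fun y => ‖u n y - v y‖ₑ)) atTop (𝓝 0) := by
  have hd : ∀ m n, AEMeasurable (fun y => ‖u m y - u n y‖ₑ) μ :=
    fun m n => ((hu m).sub (hu n)).enorm
  obtain ⟨φ, hφ, hφsmall⟩ : ∃ φ : ℕ → ℕ, StrictMono φ ∧ ∀ j, ∀ m ≥ φ j,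
      kernelNorm μ k p (fun y => ‖u m y - u (φ j) y‖ₑ) < 2⁻¹ ^ j := by
    refine extraction_forall_of_eventually (P := fun j n => ∀ m ≥ n,
      kernelNorm μ k p (fun y => ‖u m y - u n y‖ₑ) < 2⁻¹ ^ j) fun j => ?_
    obtain ⟨n₀, hn₀⟩ := hcauchy (2⁻¹ ^ j) (ENNReal.pow_pos (by norm_num) j)
    filter_upwards [eventually_ge_atTop n₀] with n hn m hm using hn₀ m n (hn.trans hm) hn
  have hsum : ∑' j, kernelNorm μ k p (fun y => ‖u (φ (j + 1)) y - u (φ j) y‖ₑ) ≠ ∞ := by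
    refine ne_top_of_le_ne_top ?_ (ENNReal.tsum_le_tsum fun j =>
      (hφsmall j _ (hφ.monotone j.le_succ)).le)
    simp
  obtain ⟨v, hv, hlim⟩ := measurable_limit_of_tendsto_metrizable_ae (fun j => hu (φ j))
    (ae_tendsto_of_tsum_kernelNorm_ne_top hk hpos hp (fun j => hd _ _) hsum)
  refine ⟨v, hv.aemeasurable, ENNReal.tendsto_atTop_zero.2 fun ε hε => ?_⟩
  obtain ⟨n₀, hn₀⟩ := hcauchy ε hε
  refine ⟨n₀, fun n hn => kernelNorm_le_of_tendsto hk (by linarith) (fun j => hd n (φ j)) ?_ ?_⟩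
  · filter_upwards [hlim] with y hy using (hy.const_sub (u n y)).enorm
  · filter_upwards [hφ.tendsto_atTop.eventually_ge_atTop n₀] with j hj using (hn₀ n (φ j) hn hj).le

end KernelNorm

section Coulomb

variable {N : ℕ} {α p : ℝ}

theorem rieszKernel_pos {γ : ℝ} (hγ : 0 < γ) (hγN : γ < N) {z : EuclideanSpace ℝ (Fin N)}
    (hz : z ≠ 0) : 0 < rieszKernel N γ z := by
  have hΓ₁ := Real.Gamma_pos_of_pos (s := ((N : ℝ) - γ) / 2) (by linarith)
  have hΓ₂ := Real.Gamma_pos_of_pos (s := γ / 2) (by linarith)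
  have hz' := norm_pos_iff.2 hz
  unfold rieszKernel
  positivity

noncomputable def coulombKernel (N : ℕ) (α : ℝ) (x y : EuclideanSpace ℝ (Fin N)) : ℝ≥0∞ :=
  ENNReal.ofReal (rieszKernel N (α / 2) (x - y))

theorem coulombNorm_eq_kernelNorm (u : EuclideanSpace ℝ (Fin N) → EuclideanSpace ℝ (Fin N)) :
    coulombNorm N α p u = kernelNorm volume (coulombKernel N α) p (fun y => ‖u y‖ₑ) :=
  rfl

theorem coulombEnergy_eq_kernelEnergy
    (u : EuclideanSpace ℝ (Fin N) → EuclideanSpace ℝ (Fin N)) :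
    coulombEnergy N α p u = kernelEnergy volume (coulombKernel N α) p (fun y => ‖u y‖ₑ) :=
  rfl

theorem measurable_coulombKernel : Measurable (uncurry (coulombKernel N α)) :=
  ENNReal.measurable_ofReal.comp
    (measurable_const.mul ((measurable_fst.sub measurable_snd).norm.pow_const _))

/-- `rieszKernel` vanishes at `0` (`Real.rpow` gives `0 ^ s = 0` for `s < 0`), so the kernel
is only positive off the diagonal. -/
theorem ae_coulombKernel_ne_zero (hα : 0 < α) (hαN : α < N) (x : EuclideanSpace ℝ (Fin N)) :
    ∀ᵐ y, coulombKernel N α x y ≠ 0 := by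
  have : Nonempty (Fin N) := ⟨⟨0, Nat.cast_pos.1 (hα.trans hαN)⟩⟩
  filter_upwards [compl_mem_ae_iff.2 (measure_singleton x)] with y hy
  exact (ENNReal.ofReal_pos.2
    (rieszKernel_pos (by linarith) (by linarith) (sub_ne_zero.2 (Ne.symm hy)))).ne'

theorem coulombNorm_add_le (hp : 1 ≤ p)
    {u v : EuclideanSpace ℝ (Fin N) → EuclideanSpace ℝ (Fin N)}
    (hu : AEMeasurable u) (hv : AEMeasurable v) :
    coulombNorm N α p (u + v) ≤ coulombNorm N α p u + coulombNorm N α p v :=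
  (kernelNorm_mono (by linarith) (ae_of_all _ fun y => enorm_add_le (u y) (v y))).trans
    (kernelNorm_add_le measurable_coulombKernel hp hu.enorm hv.enorm)

theorem coulombNorm_smul (hp : 0 < p) (c : ℝ)
    (u : EuclideanSpace ℝ (Fin N) → EuclideanSpace ℝ (Fin N)) :
    coulombNorm N α p (c • u) = ENNReal.ofReal |c| * coulombNorm N α p u := by
  simp only [coulombNorm_eq_kernelNorm, Pi.smul_apply, enorm_smul, Real.enorm_eq_ofReal_abs]
  exact kernelNorm_const_mul hp ofReal_ne_top _

theorem coulombNorm_eq_zero_iff (hα : 0 < α) (hαN : α < N) (hp : 0 < p)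
    {u : EuclideanSpace ℝ (Fin N) → EuclideanSpace ℝ (Fin N)} (hu : AEMeasurable u) :
    coulombNorm N α p u = 0 ↔ u =ᵐ[volume] 0 := by
  rw [coulombNorm_eq_kernelNorm, kernelNorm_eq_zero_iff measurable_coulombKernel
    (ae_coulombKernel_ne_zero hα hαN) hp hu.enorm]
  simp only [EventuallyEq, Pi.zero_apply, enorm_eq_zero]

theorem exists_coulombNorm_sub_tendsto_zero (hα : 0 < α) (hαN : α < N) (hp : 1 ≤ p)
    {u : ℕ → EuclideanSpace ℝ (Fin N) → EuclideanSpace ℝ (Fin N)}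
    (hu : ∀ n, AEMeasurable (u n)) (hfin : ∀ n, coulombEnergy N α p (u n) ≠ ∞)
    (hcauchy : ∀ ε > 0, ∃ n₀, ∀ m n, n₀ ≤ m → n₀ ≤ n → coulombNorm N α p (u m - u n) < ε) :
    ∃ v, AEMeasurable v ∧ coulombEnergy N α p v ≠ ∞ ∧
      Tendsto (fun n => coulombNorm N α p (u n - v)) atTop (𝓝 0) := by
  have hp0 : 0 < p := by linarith
  obtain ⟨v, hv, hlim⟩ := exists_tendsto_kernelNorm_sub measurable_coulombKernel
    (ae_coulombKernel_ne_zero hα hαN) hp hu hcauchy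
  refine ⟨v, hv, ?_, hlim⟩
  obtain ⟨n, hn⟩ := (hlim.eventually (gt_mem_nhds one_pos)).exists
  have hv_le : ∀ y, ‖v y‖ₑ ≤ ‖u n y - v y‖ₑ + ‖u n y‖ₑ := fun y => by
    simpa only [enorm_sub_rev, sub_add_cancel] using enorm_add_le (v y - u n y) (u n y)
  rw [coulombEnergy_eq_kernelEnergy, ← kernelNorm_ne_top_iff hp0]
  refine ne_top_of_le_ne_top ?_ ((kernelNorm_mono hp0 (ae_of_all _ hv_le)).trans
    (kernelNorm_add_le measurable_coulombKernel hp ((hu n).sub hv).enorm (hu n).enorm))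
  exact add_ne_top.2 ⟨(hn.trans one_lt_top).ne, (kernelNorm_ne_top_iff hp0).2 (hfin n)⟩

end Coulomb

theorem stmt5_general (N : ℕ) (α p : ℝ) (hα : 0 < α) (hαN : α < N) (hp : 1 ≤ p) :
    -- triangle inequality
    (∀ u v : EuclideanSpace ℝ (Fin N) → EuclideanSpace ℝ (Fin N),
        AEMeasurable u → AEMeasurable v →
        coulombNorm N α p (u + v) ≤ coulombNorm N α p u + coulombNorm N α p v) ∧
    -- absolute homogeneity
    (∀ (c : ℝ) (u : EuclideanSpace ℝ (Fin N) → EuclideanSpace ℝ (Fin N)),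
        coulombNorm N α p (c • u) = ENNReal.ofReal |c| * coulombNorm N α p u) ∧
    -- definiteness (up to a.e. equality)
    (∀ u : EuclideanSpace ℝ (Fin N) → EuclideanSpace ℝ (Fin N), AEMeasurable u →
        (coulombNorm N α p u = 0 ↔ u =ᵐ[volume] 0)) ∧
    -- completeness
    (∀ u : ℕ → EuclideanSpace ℝ (Fin N) → EuclideanSpace ℝ (Fin N),
        (∀ n, AEMeasurable (u n)) →
        (∀ n, coulombEnergy N α p (u n) ≠ ∞) →
        (∀ ε : ℝ≥0∞, 0 < ε → ∃ n₀ : ℕ, ∀ m n, n₀ ≤ m → n₀ ≤ n →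
            coulombNorm N α p (u m - u n) < ε) →
        ∃ v : EuclideanSpace ℝ (Fin N) → EuclideanSpace ℝ (Fin N),
          AEMeasurable v ∧ coulombEnergy N α p v ≠ ∞ ∧
            Filter.Tendsto (fun n => coulombNorm N α p (u n - v)) Filter.atTop (nhds 0)) := by
  have hp0 : 0 < p := by linarith
  exact ⟨fun _ _ => coulombNorm_add_le hp, coulombNorm_smul hp0,
    fun _ => coulombNorm_eq_zero_iff hα hαN hp0,
    fun _ hu hfin hcauchy => exists_coulombNorm_sub_tendsto_zero hα hαN hp hu hfin hcauchy⟩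

/-- The map `u ↦ (∫ |I_{α/2} ∗ |u|^p|²)^{1/(2p)}` is a norm on the Coulomb space
`Q^{α,p}(ℝᴺ,ℝᴺ)` of measurable fields with finite Coulomb energy (triangle inequality,
absolute homogeneity, definiteness up to a.e. equality), and the Coulomb space is
complete with respect to it. -/
theorem stmt5 (N : ℕ) (hN : 1 ≤ N) (α p : ℝ) (hα : 0 < α) (hαN : α < N) (hp : 1 ≤ p) :
    -- triangle inequality
    (∀ u v : EuclideanSpace ℝ (Fin N) → EuclideanSpace ℝ (Fin N),
        AEMeasurable u → AEMeasurable v →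
        coulombNorm N α p (u + v) ≤ coulombNorm N α p u + coulombNorm N α p v) ∧
    -- absolute homogeneity
    (∀ (c : ℝ) (u : EuclideanSpace ℝ (Fin N) → EuclideanSpace ℝ (Fin N)),
        coulombNorm N α p (c • u) = ENNReal.ofReal |c| * coulombNorm N α p u) ∧
    -- definiteness (up to a.e. equality)
    (∀ u : EuclideanSpace ℝ (Fin N) → EuclideanSpace ℝ (Fin N), AEMeasurable u →
        (coulombNorm N α p u = 0 ↔ u =ᵐ[volume] 0)) ∧
    -- completeness
    (∀ u : ℕ → EuclideanSpace ℝ (Fin N) → EuclideanSpace ℝ (Fin N),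
        (∀ n, AEMeasurable (u n)) →
        (∀ n, coulombEnergy N α p (u n) ≠ ∞) →
        (∀ ε : ℝ≥0∞, 0 < ε → ∃ n₀ : ℕ, ∀ m n, n₀ ≤ m → n₀ ≤ n →
            coulombNorm N α p (u m - u n) < ε) →
        ∃ v : EuclideanSpace ℝ (Fin N) → EuclideanSpace ℝ (Fin N),
          AEMeasurable v ∧ coulombEnergy N α p v ≠ ∞ ∧
            Filter.Tendsto (fun n => coulombNorm N α p (u n - v)) Filter.atTop (nhds 0)) :=
  stmt5_general N α p hα hαN hp
end

section
/- Let N ≥ 1, α ∈ (0,N), p ≥ 1. If (u_n) is a bounded sequence in Q^{α,p}(ℝᴺ, ℝᴺ) (i.e. sup_n ∫ |I_{α/2} ∗ |u_n|^p|² dx < ∞) and u_n → u in L¹_loc(ℝᴺ, ℝᴺ), then u ∈ Q^{α,p} and ∫ |I_{α/2} ∗ |u|^p|² dx ≤ liminf_n ∫ |I_{α/2} ∗ |u_n|^p|² dx. -/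
open MeasureTheory ENNReal

/-!
A bound on the Coulomb energy controls `∫_{B_R} |u|^p`, because on `B_R` the potential
`I_{α/2} ∗ |u|^p` is at least `inf_{B_{2R}} I_{α/2} · ∫_{B_R} |u|^p`. Since `p ≥ 1`, the `u_n` are
therefore bounded in `L¹_loc`, and so is their limit `u`: this is what gives the Bochner
integrals `∫_K |u_n - u|` their intended meaning rather than the junk value `0`. Along a
subsequence realising the liminf of the energies one extracts a further subsequence converging
almost everywhere, and Fatou's lemma, applied first to the potential and then to the outer
integral of its square, gives the lower semicontinuity.
-/

open Metric Filter Topology Set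

section LocalConvergence

variable {X F : Type*} [MeasurableSpace X] {μ : Measure X} [NormedAddCommGroup F]

theorem tendsto_setLIntegral_enorm_of_tendsto_integral_norm {f : ℕ → X → F} {s : Set X}
    (hf : ∀ n, IntegrableOn (f n) s μ)
    (h : Tendsto (fun n => ∫ x in s, ‖f n x‖ ∂μ) atTop (𝓝 0)) :
    Tendsto (fun n => ∫⁻ x in s, ‖f n x‖ₑ ∂μ) atTop (𝓝 0) := by
  simpa only [← ofReal_integral_norm_eq_lintegral_enorm (hf _), ofReal_zero] using
    ENNReal.tendsto_ofReal h

theorem setLIntegral_enorm_le_of_tendsto {u : ℕ → X → F} {v : X → F} {s : Set X} {M : ℝ≥0∞}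
    (hu : ∀ n, AEStronglyMeasurable (u n) μ) (hM : ∀ n, ∫⁻ x in s, ‖u n x‖ₑ ∂μ ≤ M)
    (hlim : Tendsto (fun n => ∫⁻ x in s, ‖u n x - v x‖ₑ ∂μ) atTop (𝓝 0)) :
    ∫⁻ x in s, ‖v x‖ₑ ∂μ ≤ M := by
  have hle : ∀ n, ∫⁻ x in s, ‖v x‖ₑ ∂μ ≤ ∫⁻ x in s, ‖u n x - v x‖ₑ ∂μ + M := fun n =>
    calc ∫⁻ x in s, ‖v x‖ₑ ∂μ ≤ ∫⁻ x in s, (‖u n x - v x‖ₑ + ‖u n x‖ₑ) ∂μ :=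
          lintegral_mono fun x => by
            simpa [add_comm] using enorm_sub_le (a := u n x) (b := u n x - v x)
      _ = ∫⁻ x in s, ‖u n x - v x‖ₑ ∂μ + ∫⁻ x in s, ‖u n x‖ₑ ∂μ :=
          lintegral_add_right' _ (hu n).enorm.restrict
      _ ≤ ∫⁻ x in s, ‖u n x - v x‖ₑ ∂μ + M := by gcongr; exact hM n
  exact ge_of_tendsto (by simpa using hlim.add_const M) (Eventually.of_forall hle)

theorem ae_tendsto_zero_of_tsum_lintegral_ne_top {g : ℕ → X → ℝ≥0∞}
    (hg : ∀ n, AEMeasurable (g n) μ) (h : ∑' n, ∫⁻ x, g n x ∂μ ≠ ∞) :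
    ∀ᵐ x ∂μ, Tendsto (fun n => g n x) atTop (𝓝 0) := by
  rw [← lintegral_tsum hg] at h
  filter_upwards [ae_lt_top' (AEMeasurable.tsum hg) h] with x hx
  exact ENNReal.tendsto_atTop_zero_of_tsum_ne_top hx.ne

theorem exists_subseq_ae_tendsto_of_tendsto_setLIntegral {f : ℕ → X → F} {v : X → F}
    (hf : ∀ n, AEStronglyMeasurable (f n) μ) (hv : AEStronglyMeasurable v μ)
    {B : ℕ → Set X} (hB : Monotone B) (hcover : ⋃ m, B m = univ)
    (h : ∀ m, Tendsto (fun n => ∫⁻ x in B m, ‖f n x - v x‖ₑ ∂μ) atTop (𝓝 0)) :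
    ∃ φ : ℕ → ℕ, StrictMono φ ∧ ∀ᵐ x ∂μ, Tendsto (fun k => f (φ k) x) atTop (𝓝 (v x)) := by
  obtain ⟨φ, hφ, hφB⟩ := extraction_forall_of_eventually fun m =>
    (h m).eventually (eventually_le_nhds (ENNReal.pow_pos (by simp) m : (0 : ℝ≥0∞) < 2⁻¹ ^ m))
  refine ⟨φ, hφ, ?_⟩
  rw [← Measure.restrict_univ (μ := μ), ← hcover, ae_restrict_iUnion_iff]
  intro m
  -- The terms with `k < m` need not be integrable on `B m`, hence the shift by `m`.
  have hsum : ∑' k, ∫⁻ x in B m, ‖f (φ (k + m)) x - v x‖ₑ ∂μ ≠ ∞ := by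
    refine ne_top_of_le_ne_top (b := ∑' k, (2⁻¹ : ℝ≥0∞) ^ k * 2⁻¹ ^ m) ?_ ?_
    · rw [ENNReal.tsum_mul_right, ENNReal.tsum_geometric_two]
      finiteness
    · refine ENNReal.tsum_le_tsum fun k => ?_
      calc ∫⁻ x in B m, ‖f (φ (k + m)) x - v x‖ₑ ∂μ
          ≤ ∫⁻ x in B (k + m), ‖f (φ (k + m)) x - v x‖ₑ ∂μ :=
            lintegral_mono_set (hB (Nat.le_add_left m k))
        _ ≤ 2⁻¹ ^ k * 2⁻¹ ^ m := by rw [← pow_add]; exact hφB (k + m)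
  filter_upwards [ae_tendsto_zero_of_tsum_lintegral_ne_top
    (fun k => ((hf _).sub hv).enorm.restrict) hsum] with x hx
  rw [tendsto_iff_edist_tendsto_0, ← tendsto_add_atTop_iff_nat m]
  simpa only [edist_eq_enorm_sub, Pi.sub_apply] using hx

variable [TopologicalSpace X] [SecondCountableTopology X]
  [TopologicalSpace.IsCompletelyPseudoMetrizableSpace X] [T2Space X] [BorelSpace X]

theorem setLIntegral_enorm_le_of_forall_isCompact {v : X → F} (hv : AEStronglyMeasurable v μ)
    {s : Set X} (hs : MeasurableSet s) (hμs : μ s ≠ ∞) {M : ℝ≥0∞}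
    (h : ∀ K ⊆ s, IsCompact K → IntegrableOn v K μ → ∫⁻ x in K, ‖v x‖ₑ ∂μ ≤ M) :
    ∫⁻ x in s, ‖v x‖ₑ ∂μ ≤ M := by
  set g := fun x => ‖hv.mk v x‖ₑ
  have hg : Measurable g := hv.stronglyMeasurable_mk.enorm
  set ν := μ.withDensity g
  have hν : ∀ t, MeasurableSet t → ∫⁻ x in t, ‖v x‖ₑ ∂μ = ν t := fun t ht => by
    rw [withDensity_apply _ ht]
    exact lintegral_congr_ae (ae_restrict_of_ae (hv.ae_eq_mk.mono fun x hx => by simp [g, hx]))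
  set E : ℕ → Set X := fun c => s ∩ {x | g x ≤ c}
  have hE : ∀ c, MeasurableSet (E c) := fun c => hs.inter (hg measurableSet_Iic)
  have hEs : ⋃ c, E c = s := by
    refine (iUnion_subset fun c => inter_subset_left).antisymm fun x hx => mem_iUnion.2 ?_
    obtain ⟨c, hc⟩ := exists_nat_ge ‖hv.mk v x‖₊
    exact ⟨c, hx, by simpa [g, enorm] using hc⟩
  have hbound : ∀ c, ∀ t ⊆ E c, MeasurableSet t → ∫⁻ x in t, g x ∂μ ≤ c * μ s :=
    fun c t ht ht' =>
    calc ∫⁻ x in t, g x ∂μ ≤ ∫⁻ _ in t, (c : ℝ≥0∞) ∂μ :=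
          setLIntegral_mono' ht' fun x hx => (ht hx).2
      _ ≤ c * μ s := by
        rw [setLIntegral_const]; gcongr; exact ht.trans inter_subset_left
  rw [hν s hs, ← hEs, Monotone.measure_iUnion fun c d hcd => ?_]
  · refine iSup_le fun c => ?_
    have hνE : ν (E c) ≠ ∞ := by
      rw [withDensity_apply _ (hE c)]
      exact ne_top_of_le_ne_top (by finiteness) (hbound c _ subset_rfl (hE c))
    -- Every measure on a Polish space, here `ν`, is inner regular on sets of finite measure.
    rw [(hE c).measure_eq_iSup_isCompact_of_ne_top hνE]
    refine iSup₂_le fun K hKE => iSup_le fun hK => ?_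
    rw [← hν K hK.measurableSet]
    refine h K (hKE.trans inter_subset_left) hK ⟨hv.restrict, ?_⟩
    change ∫⁻ x in K, ‖v x‖ₑ ∂μ < ∞
    rw [hν K hK.measurableSet, withDensity_apply _ hK.measurableSet]
    exact (hbound c K hKE hK.measurableSet).trans_lt (by finiteness)
  · exact inter_subset_inter_right _ fun x (hx : g x ≤ c) => hx.trans (by exact_mod_cast hcd)

theorem integrableOn_of_tendsto_integral_norm_sub [IsFiniteMeasureOnCompacts μ]
    {u : ℕ → X → F} {v : X → F} (hu : ∀ n, AEStronglyMeasurable (u n) μ)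
    (hv : AEStronglyMeasurable v μ) {K : Set X} (hK : IsCompact K) {M : ℝ≥0∞} (hM : M ≠ ∞)
    (huM : ∀ n, ∫⁻ x in K, ‖u n x‖ₑ ∂μ ≤ M)
    (hlim : ∀ K' ⊆ K, IsCompact K' → Tendsto (fun n => ∫ x in K', ‖u n x - v x‖ ∂μ) atTop (𝓝 0)) :
    IntegrableOn v K μ := by
  have huM' : ∀ n, ∀ K' ⊆ K, ∫⁻ x in K', ‖u n x‖ₑ ∂μ ≤ M := fun n K' hK' =>
    (lintegral_mono_set hK').trans (huM n)
  refine ⟨hv.restrict, (setLIntegral_enorm_le_of_forall_isCompact hv hK.measurableSet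
    hK.measure_lt_top.ne fun K' hK'K hK' hvK' => ?_).trans_lt hM.lt_top⟩
  have huK' : ∀ n, IntegrableOn (u n) K' μ := fun n =>
    ⟨(hu n).restrict, (huM' n K' hK'K).trans_lt hM.lt_top⟩
  exact setLIntegral_enorm_le_of_tendsto hu (fun n => huM' n K' hK'K)
    (tendsto_setLIntegral_enorm_of_tendsto_integral_norm (fun n => (huK' n).sub hvK')
      (hlim K' hK'K hK'))

end LocalConvergence

local notation "ℝ^" N:max => EuclideanSpace ℝ (Fin N)

theorem exists_pos_le_rieszKernel {N : ℕ} {γ : ℝ} (hγ : 0 < γ) (hγN : γ < N) {r : ℝ}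
    (hr : 0 < r) : ∃ κ > 0, ∀ x : ℝ^N, x ≠ 0 → ‖x‖ ≤ r → κ ≤ rieszKernel N γ x := by
  have hc : 0 < Real.Gamma ((N - γ) / 2) /
      (Real.Gamma (γ / 2) * Real.pi ^ ((N : ℝ) / 2) * 2 ^ γ) := by
    have := Real.Gamma_pos_of_pos (show 0 < ((N : ℝ) - γ) / 2 by linarith)
    have := Real.Gamma_pos_of_pos (show 0 < γ / 2 by linarith)
    positivity
  refine ⟨_ * r ^ (-((N : ℝ) - γ)), mul_pos hc (Real.rpow_pos_of_pos hr _), fun x hx hxr => ?_⟩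
  exact mul_le_mul_of_nonneg_left
    (Real.rpow_le_rpow_of_nonpos (norm_pos_iff.2 hx) hxr (by linarith)) hc.le

/-- The Riesz potential `I_γ ∗ f` of a nonnegative function `f`. -/
noncomputable def rieszPotential (N : ℕ) (γ : ℝ) (f : ℝ^N → ℝ≥0∞) (x : ℝ^N) : ℝ≥0∞ :=
  ∫⁻ y, ENNReal.ofReal (rieszKernel N γ (x - y)) * f y

theorem coulombEnergy_eq_lintegral_rieszPotential_sq (N : ℕ) (α p : ℝ) (u : ℝ^N → ℝ^N) :
    coulombEnergy N α p u = ∫⁻ x, rieszPotential N (α / 2) (fun y => ‖u y‖ₑ ^ p) x ^ 2 :=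
  rfl

theorem ofReal_mul_setLIntegral_le_rieszPotential {N : ℕ} [NeZero N] {γ κ R : ℝ}
    (hκ : ∀ z : ℝ^N, z ≠ 0 → ‖z‖ ≤ 2 * R → κ ≤ rieszKernel N γ z) (f : ℝ^N → ℝ≥0∞)
    {x : ℝ^N} (hx : x ∈ closedBall 0 R) :
    ENNReal.ofReal κ * ∫⁻ y in closedBall 0 R, f y ≤ rieszPotential N γ f x := by
  rw [← lintegral_const_mul' _ _ ofReal_ne_top]
  refine (lintegral_mono_ae ?_).trans (setLIntegral_le_lintegral _ _)
  filter_upwards [ae_restrict_mem measurableSet_closedBall,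
    ae_restrict_of_ae (compl_mem_ae_iff.2 (measure_singleton x))] with y hy hyx
  gcongr
  refine hκ _ (sub_ne_zero.2 (Ne.symm hyx)) ?_
  calc ‖x - y‖ ≤ ‖x‖ + ‖y‖ := norm_sub_le _ _
    _ ≤ R + R := add_le_add (mem_closedBall_zero_iff.1 hx) (mem_closedBall_zero_iff.1 hy)
    _ = 2 * R := by ring

theorem exists_setLIntegral_rpow_le_of_coulombEnergy_le {N : ℕ} {α : ℝ} (hα : 0 < α)
    (hαN : α < N) (p : ℝ) {C : ℝ≥0∞} (hC : C ≠ ∞) {R : ℝ} (hR : 0 < R) :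
    ∃ M ≠ ∞, ∀ w : ℝ^N → ℝ^N, coulombEnergy N α p w ≤ C →
      ∫⁻ y in closedBall 0 R, ‖w y‖ₑ ^ p ≤ M := by
  have : NeZero N := ⟨by rintro rfl; simp at hαN; linarith⟩
  obtain ⟨κ, hκ, hκI⟩ := exists_pos_le_rieszKernel (N := N) (γ := α / 2) (by positivity)
    (by linarith) (r := 2 * R) (by positivity)
  set V := volume (closedBall (0 : ℝ^N) R)
  have hV : V ≠ 0 := (measure_closedBall_pos _ _ hR).ne'
  have hκ' : ENNReal.ofReal κ ≠ 0 := by simpa using hκ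
  refine ⟨(C / V) ^ (2 : ℝ)⁻¹ / ENNReal.ofReal κ, by finiteness, fun w hw => ?_⟩
  rw [ENNReal.le_div_iff_mul_le (.inl hκ') (.inl ofReal_ne_top), mul_comm,
    ENNReal.le_rpow_inv_iff two_pos, ENNReal.le_div_iff_mul_le (.inl hV)
    (.inl measure_closedBall_lt_top.ne)]
  calc (ENNReal.ofReal κ * ∫⁻ y in closedBall 0 R, ‖w y‖ₑ ^ p) ^ (2 : ℝ) * V
      = ∫⁻ _ in closedBall 0 R, (ENNReal.ofReal κ * ∫⁻ y in closedBall 0 R, ‖w y‖ₑ ^ p) ^ 2 := by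
        rw [setLIntegral_const, rpow_two]
    _ ≤ ∫⁻ x in closedBall 0 R, rieszPotential N (α / 2) (fun y => ‖w y‖ₑ ^ p) x ^ 2 :=
        setLIntegral_mono' measurableSet_closedBall fun x hx =>
          pow_le_pow_left' (ofReal_mul_setLIntegral_le_rieszPotential hκI _ hx) 2
    _ ≤ ∫⁻ x, rieszPotential N (α / 2) (fun y => ‖w y‖ₑ ^ p) x ^ 2 :=
        setLIntegral_le_lintegral _ _
    _ ≤ C := coulombEnergy_eq_lintegral_rieszPotential_sq N α p w ▸ hw

theorem ENNReal.le_one_add_rpow {t : ℝ≥0∞} {p : ℝ} (hp : 1 ≤ p) : t ≤ 1 + t ^ p := by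
  rcases le_total t 1 with ht | ht
  · exact le_add_right ht
  · calc t = t ^ (1 : ℝ) := (rpow_one t).symm
      _ ≤ t ^ p := rpow_le_rpow_of_exponent_le ht hp
      _ ≤ 1 + t ^ p := le_add_self

theorem exists_setLIntegral_enorm_le_of_coulombEnergy_le {N : ℕ} {α p : ℝ} (hα : 0 < α)
    (hαN : α < N) (hp : 1 ≤ p) {C : ℝ≥0∞} (hC : C ≠ ∞) {K : Set (ℝ^N)} (hK : IsCompact K) :
    ∃ M ≠ ∞, ∀ w : ℝ^N → ℝ^N, coulombEnergy N α p w ≤ C → ∫⁻ y in K, ‖w y‖ₑ ≤ M := by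
  obtain ⟨R, hR, hKR⟩ := hK.isBounded.subset_closedBall_lt 0 0
  obtain ⟨M, hM, hMw⟩ := exists_setLIntegral_rpow_le_of_coulombEnergy_le hα hαN p hC hR
  refine ⟨volume (closedBall (0 : ℝ^N) R) + M, add_ne_top.2 ⟨measure_closedBall_lt_top.ne, hM⟩,
    fun w hw => ?_⟩
  calc ∫⁻ y in K, ‖w y‖ₑ ≤ ∫⁻ y in closedBall 0 R, ‖w y‖ₑ := lintegral_mono_set hKR
    _ ≤ ∫⁻ y in closedBall 0 R, (1 + ‖w y‖ₑ ^ p) := lintegral_mono fun y => ENNReal.le_one_add_rpow hp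
    _ = volume (closedBall (0 : ℝ^N) R) + ∫⁻ y in closedBall 0 R, ‖w y‖ₑ ^ p := by
        rw [lintegral_add_left measurable_const, setLIntegral_const, one_mul]
    _ ≤ volume (closedBall (0 : ℝ^N) R) + M := by gcongr; exact hMw w hw

theorem measurable_rieszKernel (N : ℕ) (γ : ℝ) : Measurable (rieszKernel N γ) :=
  measurable_const.mul (measurable_norm.pow_const _)

theorem aemeasurable_rieszPotential {N : ℕ} {γ : ℝ} {f : ℝ^N → ℝ≥0∞} (hf : AEMeasurable f) :
    AEMeasurable (rieszPotential N γ f) :=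
  AEMeasurable.lintegral_prod_right' (f := fun q : ℝ^N × ℝ^N =>
      ENNReal.ofReal (rieszKernel N γ (q.1 - q.2)) * f q.2)
    (((measurable_rieszKernel N γ).comp (measurable_fst.sub measurable_snd)).ennreal_ofReal
      |>.aemeasurable.mul hf.comp_snd)

theorem rieszPotential_le_liminf {N : ℕ} {γ : ℝ} {f : ℕ → ℝ^N → ℝ≥0∞} {g : ℝ^N → ℝ≥0∞}
    (hf : ∀ k, AEMeasurable (f k)) (hfg : ∀ᵐ y, Tendsto (fun k => f k y) atTop (𝓝 (g y)))
    (x : ℝ^N) :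
    rieszPotential N γ g x ≤ liminf (fun k => rieszPotential N γ (f k) x) atTop := by
  have hI : Measurable fun y => ENNReal.ofReal (rieszKernel N γ (x - y)) :=
    ((measurable_rieszKernel N γ).comp (measurable_const.sub measurable_id)).ennreal_ofReal
  calc rieszPotential N γ g x
      = ∫⁻ y, liminf (fun k => ENNReal.ofReal (rieszKernel N γ (x - y)) * f k y) atTop :=
        lintegral_congr_ae <| hfg.mono fun y hy =>
          (ENNReal.Tendsto.const_mul hy (.inr ofReal_ne_top)).liminf_eq.symm
    _ ≤ _ := lintegral_liminf_le' fun k => hI.aemeasurable.mul (hf k)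

theorem coulombEnergy_le_liminf {N : ℕ} {α p : ℝ} {w : ℕ → ℝ^N → ℝ^N} {v : ℝ^N → ℝ^N}
    (hw : ∀ k, AEMeasurable (w k)) (hwv : ∀ᵐ y, Tendsto (fun k => w k y) atTop (𝓝 (v y))) :
    coulombEnergy N α p v ≤ liminf (fun k => coulombEnergy N α p (w k)) atTop := by
  have hwp : ∀ k, AEMeasurable fun y => ‖w k y‖ₑ ^ p := fun k => (hw k).enorm.pow_const p
  have hpot : ∀ x, rieszPotential N (α / 2) (fun y => ‖v y‖ₑ ^ p) x ^ 2 ≤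
      liminf (fun k => rieszPotential N (α / 2) (fun y => ‖w k y‖ₑ ^ p) x ^ 2) atTop := by
    intro x
    have hsq : Monotone fun t : ℝ≥0∞ => t ^ 2 := fun _ _ h => pow_le_pow_left' h 2
    refine (pow_le_pow_left' (rieszPotential_le_liminf hwp (hwv.mono fun y hy => ?_) x) 2).trans
      (hsq.map_liminf_of_continuousAt _ (ENNReal.continuous_pow 2).continuousAt).le
    exact (ENNReal.continuous_rpow_const.tendsto _).comp ((continuous_enorm.tendsto _).comp hy)
  rw [coulombEnergy_eq_lintegral_rieszPotential_sq]
  calc ∫⁻ x, rieszPotential N (α / 2) (fun y => ‖v y‖ₑ ^ p) x ^ 2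
      ≤ ∫⁻ x, liminf (fun k => rieszPotential N (α / 2) (fun y => ‖w k y‖ₑ ^ p) x ^ 2) atTop :=
        lintegral_mono hpot
    _ ≤ liminf (fun k => coulombEnergy N α p (w k)) atTop :=
        lintegral_liminf_le' fun k => (aemeasurable_rieszPotential (hwp k)).pow_const 2

theorem stmt6_general (N : ℕ) (α p : ℝ) (hα : 0 < α) (hαN : α < N) (hp : 1 ≤ p)
    (u : ℕ → EuclideanSpace ℝ (Fin N) → EuclideanSpace ℝ (Fin N))
    (v : EuclideanSpace ℝ (Fin N) → EuclideanSpace ℝ (Fin N))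
    (humeas : ∀ n, AEMeasurable (u n)) (hvmeas : AEMeasurable v)
    (hbdd : ∃ C : ℝ≥0∞, C ≠ ∞ ∧ ∀ n, coulombEnergy N α p (u n) ≤ C)
    (hloc : ∀ K : Set (EuclideanSpace ℝ (Fin N)), IsCompact K →
        Filter.Tendsto (fun n => ∫ x in K, ‖u n x - v x‖) Filter.atTop (nhds 0)) :
    coulombEnergy N α p v ≠ ∞ ∧
      coulombEnergy N α p v ≤
        Filter.liminf (fun n => coulombEnergy N α p (u n)) Filter.atTop := by
  obtain ⟨C, hC, huC⟩ := hbdd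
  have hu n : AEStronglyMeasurable (u n) := (humeas n).aestronglyMeasurable
  have hv : AEStronglyMeasurable v := hvmeas.aestronglyMeasurable
  have hL1 K (hK : IsCompact K) : Tendsto (fun n => ∫⁻ x in K, ‖u n x - v x‖ₑ) atTop (𝓝 0) := by
    obtain ⟨M, hM, hMw⟩ := exists_setLIntegral_enorm_le_of_coulombEnergy_le hα hαN hp hC hK
    have hvK := integrableOn_of_tendsto_integral_norm_sub hu hv hK hM (fun n => hMw _ (huC n))
      fun K' _ hK' => hloc K' hK'
    exact tendsto_setLIntegral_enorm_of_tendsto_integral_norm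
      (fun n => IntegrableOn.sub ⟨(hu n).restrict, (hMw _ (huC n)).trans_lt hM.lt_top⟩ hvK)
      (hloc K hK)
  obtain ⟨φ, hφL, hφ⟩ := exists_seq_tendsto_liminf (f := atTop)
    (u := fun n => coulombEnergy N α p (u n))
  obtain ⟨ψ, hψ, hae⟩ := exists_subseq_ae_tendsto_of_tendsto_setLIntegral (fun k => hu (φ k)) hv
    (B := fun m => closedBall 0 m) (fun _ _ h => closedBall_subset_closedBall (Nat.cast_le.2 h))
    (iUnion_closedBall_nat 0) fun m => (hL1 _ (isCompact_closedBall 0 m)).comp hφ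
  have hle : coulombEnergy N α p v ≤ liminf (fun n => coulombEnergy N α p (u n)) atTop :=
    calc coulombEnergy N α p v ≤ liminf (fun k => coulombEnergy N α p (u (φ (ψ k)))) atTop :=
          coulombEnergy_le_liminf (fun k => humeas _) hae
      _ = liminf (fun n => coulombEnergy N α p (u n)) atTop :=
          (hφL.comp hψ.tendsto_atTop).liminf_eq
  exact ⟨ne_top_of_le_ne_top hC (hle.trans (liminf_le_of_frequently_le' (.of_forall huC))), hle⟩

/-- Fatou property of the Coulomb energy: if `(u_n)` is bounded in `Q^{α,p}` and
`u_n → u` in `L¹_loc`, then `u ∈ Q^{α,p}` and the Coulomb energy of `u` is at most the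
liminf of the Coulomb energies of the `u_n`. -/
theorem stmt6 (N : ℕ) (hN : 1 ≤ N) (α p : ℝ) (hα : 0 < α) (hαN : α < N) (hp : 1 ≤ p)
    (u : ℕ → EuclideanSpace ℝ (Fin N) → EuclideanSpace ℝ (Fin N))
    (v : EuclideanSpace ℝ (Fin N) → EuclideanSpace ℝ (Fin N))
    (humeas : ∀ n, AEMeasurable (u n)) (hvmeas : AEMeasurable v)
    (hbdd : ∃ C : ℝ≥0∞, C ≠ ∞ ∧ ∀ n, coulombEnergy N α p (u n) ≤ C)
    (hloc : ∀ K : Set (EuclideanSpace ℝ (Fin N)), IsCompact K →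
        Filter.Tendsto (fun n => ∫ x in K, ‖u n x - v x‖) Filter.atTop (nhds 0)) :
    coulombEnergy N α p v ≠ ∞ ∧
      coulombEnergy N α p v ≤
        Filter.liminf (fun n => coulombEnergy N α p (u n)) Filter.atTop :=
  stmt6_general N α p hα hαN hp u v humeas hvmeas hbdd hloc
end

section
/- Let α, β ∈ (0, N) with α + β < N. Then the Riesz kernels satisfy the semigroup property I_{α+β} = I_α ∗ I_β, where I_γ(x) = Γ((N−γ)/2) / (Γ(γ/2) π^{N/2} 2^γ) · |x|^{−(N−γ)}. -/
open MeasureTheory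

open Set Real Module
open scoped ENNReal

/-!
Subordination: `Γ(a) r^{-a} = ∫₀^∞ t^{a-1} e^{-rt} dt` for `a, r > 0`. Writing `|x - y|^{-(N-α)}`
and `|y|^{-(N-β)}` this way (with `r = |x - y|²`, `r = |y|²`), Tonelli reduces the convolution to
Gaussian convolutions `∫ e^{-t|x-y|² - s|y|²} dy = (π/(t+s))^{N/2} e^{-ts|x|²/(t+s)}`. In the
remaining double integral over `t, s > 0` the substitution `s = tu` separates the variables into a
Gamma integral in `t`, producing `|x|^{-(N-α-β)}`, and the Beta integral
`∫₀^∞ u^{p-1} (1+u)^{-(p+q)} du = Γ(p)Γ(q)/Γ(p+q)` in `u`.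
-/

lemma lintegral_ofReal_eq_ofReal_integral_of_pos {α : Type*} [MeasurableSpace α] {μ : Measure α}
    {f : α → ℝ} (hf : 0 ≤ᵐ[μ] f) (hpos : 0 < ∫ x, f x ∂μ) :
    ∫⁻ x, ENNReal.ofReal (f x) ∂μ = ENNReal.ofReal (∫ x, f x ∂μ) :=
  (ofReal_integral_eq_lintegral_ofReal (.of_integral_ne_zero hpos.ne') hf).symm

lemma lintegral_ofReal_const_mul {α : Type*} [MeasurableSpace α] {μ : Measure α}
    {c : ℝ} (hc : 0 ≤ c) (f : α → ℝ) :
    ∫⁻ x, ENNReal.ofReal (c * f x) ∂μ = ENNReal.ofReal c * ∫⁻ x, ENNReal.ofReal (f x) ∂μ := by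
  simp_rw [ENNReal.ofReal_mul hc]
  exact lintegral_const_mul' _ _ ENNReal.ofReal_ne_top

lemma lintegral_Ioi_eq_ofReal_mul_lintegral_comp_mul_left {k : ℝ} (hk : 0 < k) {f : ℝ → ℝ≥0∞}
    (hf : Measurable f) :
    ∫⁻ x in Ioi 0, f x = ENNReal.ofReal k * ∫⁻ x in Ioi 0, f (k * x) := by
  have h := setLIntegral_map (measurableSet_Ioi (a := (0:ℝ))) hf (measurable_const_mul k)
    (μ := volume)
  rw [preimage_const_mul_Ioi₀ _ hk, zero_div, Real.map_volume_mul_left hk.ne',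
    Measure.restrict_smul, lintegral_smul_measure, abs_of_pos (inv_pos.2 hk)] at h
  rw [← h, smul_eq_mul, ← mul_assoc, ← ENNReal.ofReal_mul hk.le, mul_inv_cancel₀ hk.ne',
    ENNReal.ofReal_one, one_mul]

lemma lintegral_rpow_mul_exp_neg_mul_Ioi {a r : ℝ} (ha : 0 < a) (hr : 0 < r) :
    ∫⁻ t in Ioi 0, ENNReal.ofReal (t ^ (a - 1) * exp (-(r * t))) =
      ENNReal.ofReal (Gamma a * r ^ (-a)) := by
  have h := integral_rpow_mul_exp_neg_mul_Ioi ha hr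
  rw [one_div, inv_rpow hr.le, ← rpow_neg hr.le, mul_comm] at h
  rw [lintegral_ofReal_eq_ofReal_integral_of_pos, h]
  · filter_upwards [ae_restrict_mem measurableSet_Ioi] with t ht
    have : 0 < t := ht
    positivity
  · rw [h]
    positivity

lemma lintegral_rpow_mul_one_add_rpow_neg_Ioi {p q : ℝ} (hp : 0 < p) (hq : 0 < q) :
    ∫⁻ u in Ioi 0, ENNReal.ofReal (u ^ (p - 1) * (1 + u) ^ (-(p + q))) =
      ENNReal.ofReal (Gamma p * Gamma q / Gamma (p + q)) := by
  have hpq : 0 < p + q := add_pos hp hq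
  have hΓ : 0 < Gamma (p + q) := Gamma_pos_of_pos hpq
  suffices h : ENNReal.ofReal (Gamma (p + q)) *
      ∫⁻ u in Ioi 0, ENNReal.ofReal (u ^ (p - 1) * (1 + u) ^ (-(p + q))) =
        ENNReal.ofReal (Gamma p * Gamma q) by
    rw [← ENNReal.eq_div_iff (by positivity) ENNReal.ofReal_ne_top] at h
    rw [h, ENNReal.ofReal_div_of_pos hΓ]
  -- `Γ(p + q) (1 + u)^{-(p+q)}` is a Gamma integral in a new variable `w`.
  calc ENNReal.ofReal (Gamma (p + q)) *
        ∫⁻ u in Ioi 0, ENNReal.ofReal (u ^ (p - 1) * (1 + u) ^ (-(p + q)))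
      = ∫⁻ u in Ioi 0, ∫⁻ w in Ioi 0,
          ENNReal.ofReal (u ^ (p - 1) * (w ^ (p + q - 1) * exp (-((1 + u) * w)))) := by
        rw [← lintegral_const_mul' _ _ ENNReal.ofReal_ne_top]
        refine setLIntegral_congr_fun measurableSet_Ioi fun u (hu : 0 < u) => ?_
        rw [lintegral_ofReal_const_mul (by positivity),
          lintegral_rpow_mul_exp_neg_mul_Ioi hpq (by positivity),
          ← ENNReal.ofReal_mul hΓ.le, ← ENNReal.ofReal_mul (by positivity)]
        ring_nf
    _ = ∫⁻ w in Ioi 0, ∫⁻ u in Ioi 0,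
          ENNReal.ofReal (u ^ (p - 1) * (w ^ (p + q - 1) * exp (-((1 + u) * w)))) :=
        lintegral_lintegral_swap (by fun_prop)
    _ = ∫⁻ w in Ioi 0, ENNReal.ofReal (Gamma p * (w ^ (q - 1) * exp (-(1 * w)))) := by
        refine setLIntegral_congr_fun measurableSet_Ioi fun w (hw : 0 < w) => ?_
        have h : ∀ u, u ^ (p - 1) * (w ^ (p + q - 1) * exp (-((1 + u) * w))) =
            w ^ (p + q - 1) * exp (-w) * (u ^ (p - 1) * exp (-(w * u))) := by
          intro u
          rw [show -((1 + u) * w) = -w + -(w * u) by ring, exp_add]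
          ring
        have hw' : w ^ (p + q - 1) * w ^ (-p) = w ^ (q - 1) := by
          rw [← rpow_add hw]; ring_nf
        simp_rw [h]
        rw [lintegral_ofReal_const_mul (by positivity), lintegral_rpow_mul_exp_neg_mul_Ioi hp hw,
          ← ENNReal.ofReal_mul (by positivity), ← hw']
        ring_nf
    _ = ENNReal.ofReal (Gamma p * Gamma q) := by
        rw [lintegral_ofReal_const_mul (Gamma_pos_of_pos hp).le,
          lintegral_rpow_mul_exp_neg_mul_Ioi hq one_pos, one_rpow, mul_one,
          ← ENNReal.ofReal_mul (Gamma_pos_of_pos hp).le]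

lemma lintegral_rpow_mul_rpow_mul_add_rpow_neg_mul_exp {a b d m : ℝ} (hm : 0 < m)
    (hd : d < a + b) (ha : a < d) (hb : b < d) :
    ∫⁻ t in Ioi 0, ∫⁻ s in Ioi 0,
        ENNReal.ofReal (t ^ (a - 1) * s ^ (b - 1) * (t + s) ^ (-d) * exp (-(t * s / (t + s) * m))) =
      ENNReal.ofReal (Gamma (a + b - d) * m ^ (-(a + b - d)) *
        (Gamma (d - a) * Gamma (d - b) / Gamma (d - a + (d - b)))) := by
  have hsubst : ∀ t ∈ Ioi (0 : ℝ), ∫⁻ s in Ioi 0,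
        ENNReal.ofReal (t ^ (a - 1) * s ^ (b - 1) * (t + s) ^ (-d) * exp (-(t * s / (t + s) * m))) =
      ∫⁻ u in Ioi 0, ENNReal.ofReal (u ^ (b - 1) * (1 + u) ^ (-d) *
        (t ^ (a + b - d - 1) * exp (-(m * u / (1 + u) * t)))) := by
    intro t (ht : 0 < t)
    rw [lintegral_Ioi_eq_ofReal_mul_lintegral_comp_mul_left ht (by fun_prop),
      ← lintegral_ofReal_const_mul ht.le]
    refine setLIntegral_congr_fun measurableSet_Ioi fun u (hu : 0 < u) => ?_
    have htpow : t ^ (a + b - d - 1) = t * t ^ (a - 1) * t ^ (b - 1) * t ^ (-d) := by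
      rw [show a + b - d - 1 = 1 + (a - 1) + (b - 1) + -d by ring, rpow_add ht, rpow_add ht,
        rpow_add ht, rpow_one]
    rw [show t + t * u = t * (1 + u) by ring, mul_rpow ht.le hu.le,
      mul_rpow ht.le (by positivity : (0 : ℝ) ≤ 1 + u),
      show t * (t * u) / (t * (1 + u)) * m = m * u / (1 + u) * t by field_simp, htpow]
    ring_nf
  have hσ : 0 < a + b - d := by linarith
  have hgamma : ∀ u ∈ Ioi (0 : ℝ), ∫⁻ t in Ioi 0, ENNReal.ofReal (u ^ (b - 1) * (1 + u) ^ (-d) *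
        (t ^ (a + b - d - 1) * exp (-(m * u / (1 + u) * t)))) =
      ENNReal.ofReal (Gamma (a + b - d) * m ^ (-(a + b - d)) *
        (u ^ (d - a - 1) * (1 + u) ^ (-(d - a + (d - b))))) := by
    intro u (hu : 0 < u)
    have h1u : 0 < 1 + u := by positivity
    rw [lintegral_ofReal_const_mul (by positivity),
      lintegral_rpow_mul_exp_neg_mul_Ioi hσ (by positivity), ← ENNReal.ofReal_mul (by positivity),
      div_rpow (by positivity) h1u.le, mul_rpow hm.le hu.le, rpow_neg h1u.le (a + b - d),
      div_inv_eq_mul, show d - a - 1 = b - 1 + -(a + b - d) by ring, rpow_add hu,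
      show -(d - a + (d - b)) = -d + (a + b - d) by ring, rpow_add h1u]
    ring_nf
  rw [setLIntegral_congr_fun measurableSet_Ioi hsubst, lintegral_lintegral_swap (by fun_prop),
    setLIntegral_congr_fun measurableSet_Ioi hgamma, lintegral_ofReal_const_mul (by positivity),
    lintegral_rpow_mul_one_add_rpow_neg_Ioi (by linarith) (by linarith),
    ← ENNReal.ofReal_mul (by positivity)]

lemma mul_norm_sub_sq_add_mul_norm_sq_eq {V : Type*} [NormedAddCommGroup V]
    [InnerProductSpace ℝ V] {t s : ℝ} (hts : t + s ≠ 0) (x y : V) :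
    t * ‖x - y‖ ^ 2 + s * ‖y‖ ^ 2 =
      (t + s) * ‖y - (t / (t + s)) • x‖ ^ 2 + t * s / (t + s) * ‖x‖ ^ 2 := by
  rw [norm_sub_sq_real, norm_sub_sq_real, real_inner_smul_right, norm_smul, real_inner_comm,
    Real.norm_eq_abs, mul_pow, sq_abs]
  field_simp
  ring

section InnerProductSpace

variable {V : Type*} [NormedAddCommGroup V] [InnerProductSpace ℝ V] [FiniteDimensional ℝ V]
  [MeasurableSpace V] [BorelSpace V]

lemma lintegral_exp_neg_mul_norm_sq {b : ℝ} (hb : 0 < b) :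
    ∫⁻ y : V, ENNReal.ofReal (exp (-(b * ‖y‖ ^ 2))) =
      ENNReal.ofReal ((π / b) ^ (finrank ℝ V / 2 : ℝ)) := by
  have h := GaussianFourier.integral_rexp_neg_mul_sq_norm (V := V) hb
  simp_rw [neg_mul] at h
  rw [lintegral_ofReal_eq_ofReal_integral_of_pos (ae_of_all _ fun y => (exp_pos _).le), h]
  rw [h]
  positivity

lemma lintegral_exp_neg_mul_norm_sub_sq_add {t s : ℝ} (ht : 0 < t) (hs : 0 < s) (x : V) :
    ∫⁻ y : V, ENNReal.ofReal (exp (-(t * ‖x - y‖ ^ 2 + s * ‖y‖ ^ 2))) =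
      ENNReal.ofReal ((π / (t + s)) ^ (finrank ℝ V / 2 : ℝ) *
        exp (-(t * s / (t + s) * ‖x‖ ^ 2))) := by
  have hts : 0 < t + s := add_pos ht hs
  have h : ∀ y : V, exp (-(t * ‖x - y‖ ^ 2 + s * ‖y‖ ^ 2)) =
      exp (-(t * s / (t + s) * ‖x‖ ^ 2)) * exp (-((t + s) * ‖y - (t / (t + s)) • x‖ ^ 2)) := by
    intro y
    rw [mul_norm_sub_sq_add_mul_norm_sq_eq hts.ne', ← exp_add]
    ring_nf
  simp_rw [h]
  rw [lintegral_ofReal_const_mul (exp_pos _).le, mul_comm,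
    lintegral_sub_right_eq_self (fun y => ENNReal.ofReal (exp (-((t + s) * ‖y‖ ^ 2)))),
    lintegral_exp_neg_mul_norm_sq hts, ← ENNReal.ofReal_mul (by positivity)]

lemma Gamma_mul_Gamma_mul_lintegral_rpow_norm_sub_sq_mul_rpow_norm_sq {x : V} (hx : x ≠ 0)
    {a b : ℝ} (hd : (finrank ℝ V / 2 : ℝ) < a + b) (ha : a < finrank ℝ V / 2)
    (hb : b < finrank ℝ V / 2) :
    ENNReal.ofReal (Gamma a * Gamma b) *
        ∫⁻ y : V, ENNReal.ofReal ((‖x - y‖ ^ 2) ^ (-a) * (‖y‖ ^ 2) ^ (-b)) =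
      ENNReal.ofReal (π ^ (finrank ℝ V / 2 : ℝ) * (Gamma (a + b - finrank ℝ V / 2) *
        (‖x‖ ^ 2) ^ (-(a + b - finrank ℝ V / 2)) *
        (Gamma (finrank ℝ V / 2 - a) * Gamma (finrank ℝ V / 2 - b) /
          Gamma (finrank ℝ V / 2 - a + (finrank ℝ V / 2 - b))))) := by
  set d : ℝ := finrank ℝ V / 2
  have : Nontrivial V := ⟨⟨x, 0, hx⟩⟩
  have ha₀ : 0 < a := by linarith
  have hb₀ : 0 < b := by linarith
  set ρ : Measure (ℝ × ℝ) := (volume.restrict (Ioi 0)).prod (volume.restrict (Ioi 0))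
  have hρ : ∀ᵐ z ∂ρ, 0 < z.1 ∧ 0 < z.2 := by
    simp only [ρ, Measure.prod_restrict]
    exact ae_restrict_mem (measurableSet_Ioi.prod measurableSet_Ioi)
  calc ENNReal.ofReal (Gamma a * Gamma b) *
        ∫⁻ y : V, ENNReal.ofReal ((‖x - y‖ ^ 2) ^ (-a) * (‖y‖ ^ 2) ^ (-b))
      = ∫⁻ y : V, ∫⁻ z, ENNReal.ofReal (z.1 ^ (a - 1) * z.2 ^ (b - 1) *
          exp (-(z.1 * ‖x - y‖ ^ 2 + z.2 * ‖y‖ ^ 2))) ∂ρ := by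
        rw [← lintegral_ofReal_const_mul (by positivity)]
        refine lintegral_congr_ae ?_
        filter_upwards [compl_mem_ae_iff.2 (measure_singleton x),
          compl_mem_ae_iff.2 (measure_singleton (0 : V))] with y (hyx : y ≠ x) (hy : y ≠ 0)
        have hxy : 0 < ‖x - y‖ ^ 2 := by
          have := sub_ne_zero.2 hyx.symm
          positivity
        have hy' : 0 < ‖y‖ ^ 2 := by positivity
        rw [show Gamma a * Gamma b * ((‖x - y‖ ^ 2) ^ (-a) * (‖y‖ ^ 2) ^ (-b)) =
            Gamma a * (‖x - y‖ ^ 2) ^ (-a) * (Gamma b * (‖y‖ ^ 2) ^ (-b)) by ring,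
          ENNReal.ofReal_mul (by positivity), ← lintegral_rpow_mul_exp_neg_mul_Ioi ha₀ hxy,
          ← lintegral_rpow_mul_exp_neg_mul_Ioi hb₀ hy', ← lintegral_prod_mul (by fun_prop)
          (by fun_prop)]
        refine lintegral_congr_ae ?_
        filter_upwards [hρ] with z hz
        rw [← ENNReal.ofReal_mul (by have := hz.1; positivity), neg_add, exp_add]
        ring_nf
    _ = ∫⁻ z, (∫⁻ y : V, ENNReal.ofReal (z.1 ^ (a - 1) * z.2 ^ (b - 1) *
          exp (-(z.1 * ‖x - y‖ ^ 2 + z.2 * ‖y‖ ^ 2)))) ∂ρ :=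
        lintegral_lintegral_swap (by fun_prop)
    _ = ∫⁻ z, ENNReal.ofReal (π ^ d * (z.1 ^ (a - 1) * z.2 ^ (b - 1) * (z.1 + z.2) ^ (-d) *
          exp (-(z.1 * z.2 / (z.1 + z.2) * ‖x‖ ^ 2)))) ∂ρ := by
        refine lintegral_congr_ae ?_
        filter_upwards [hρ] with z ⟨ht, hs⟩
        rw [lintegral_ofReal_const_mul (by positivity),
          lintegral_exp_neg_mul_norm_sub_sq_add ht hs, ← ENNReal.ofReal_mul (by positivity),
          div_rpow pi_pos.le (by positivity), rpow_neg (by positivity), div_eq_mul_inv]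
        congr 1
        ring
    _ = _ := by
        rw [lintegral_ofReal_const_mul (by positivity), lintegral_prod _ (by fun_prop),
          lintegral_rpow_mul_rpow_mul_add_rpow_neg_mul_exp (by positivity) hd ha hb,
          ← ENNReal.ofReal_mul (by positivity)]

theorem integral_norm_sub_rpow_mul_norm_rpow {x : V} (hx : x ≠ 0) {α β : ℝ} (hα : 0 < α)
    (hβ : 0 < β) (hαβ : α + β < finrank ℝ V) :
    ∫ y : V, ‖x - y‖ ^ (-(finrank ℝ V - α)) * ‖y‖ ^ (-(finrank ℝ V - β)) =
      π ^ (finrank ℝ V / 2 : ℝ) * Gamma (α / 2) * Gamma (β / 2) *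
          Gamma ((finrank ℝ V - (α + β)) / 2) /
        (Gamma ((finrank ℝ V - α) / 2) * Gamma ((finrank ℝ V - β) / 2) * Gamma ((α + β) / 2)) *
        ‖x‖ ^ (-(finrank ℝ V - (α + β))) := by
  set n : ℝ := (finrank ℝ V : ℝ) with hn
  have hsq : ∀ (z : V) (γ : ℝ), ‖z‖ ^ (-(n - γ)) = (‖z‖ ^ 2) ^ (-((n - γ) / 2)) := by
    intro z γ
    rw [← rpow_natCast, ← rpow_mul (norm_nonneg z)]
    ring_nf
  have hF := Gamma_mul_Gamma_mul_lintegral_rpow_norm_sub_sq_mul_rpow_norm_sq hx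
    (a := (n - α) / 2) (b := (n - β) / 2) (by linarith) (by linarith) (by linarith)
  rw [show (n - α) / 2 + (n - β) / 2 - n / 2 = (n - (α + β)) / 2 by ring,
    show n / 2 - (n - α) / 2 = α / 2 by ring, show n / 2 - (n - β) / 2 = β / 2 by ring,
    show α / 2 + β / 2 = (α + β) / 2 by ring, ← hn] at hF
  have := Gamma_pos_of_pos (show 0 < (n - α) / 2 by linarith)
  have := Gamma_pos_of_pos (show 0 < (n - β) / 2 by linarith)
  have := Gamma_pos_of_pos (show 0 < (n - (α + β)) / 2 by linarith)
  have := Gamma_pos_of_pos (half_pos hα)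
  have := Gamma_pos_of_pos (half_pos hβ)
  have := Gamma_pos_of_pos (half_pos (add_pos hα hβ))
  rw [← ENNReal.eq_div_iff (by positivity) ENNReal.ofReal_ne_top,
    ← ENNReal.ofReal_div_of_pos (by positivity)] at hF
  simp_rw [hsq]
  rw [integral_eq_lintegral_of_nonneg_ae (ae_of_all _ fun y => by positivity) (by fun_prop), hF,
    ENNReal.toReal_ofReal (by positivity)]
  field_simp

end InnerProductSpace

theorem stmt9_general (N : ℕ) (α β : ℝ) (hα : 0 < α) (hβ : 0 < β)
    (hαβ : α + β < N) (x : EuclideanSpace ℝ (Fin N)) (hx : x ≠ 0) :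
    ∫ y, rieszKernel N α (x - y) * rieszKernel N β y = rieszKernel N (α + β) x := by
  have h := integral_norm_sub_rpow_mul_norm_rpow hx hα hβ (by simpa using hαβ)
  simp only [finrank_euclideanSpace_fin] at h
  simp only [rieszKernel]
  simp_rw [mul_assoc, mul_left_comm (‖x - _‖ ^ (_ : ℝ))]
  rw [integral_const_mul, integral_const_mul, h]
  have := Gamma_pos_of_pos (half_pos hα)
  have := Gamma_pos_of_pos (half_pos hβ)
  have := Gamma_pos_of_pos (show 0 < ((N : ℝ) - α) / 2 by linarith)
  have := Gamma_pos_of_pos (show 0 < ((N : ℝ) - β) / 2 by linarith)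
  rw [rpow_add two_pos]
  field_simp

/-- Semigroup property of the Riesz kernels: `I_α ∗ I_β = I_{α+β}` for
`α, β ∈ (0, N)` with `α + β < N`. -/
theorem stmt9 (N : ℕ) (hN : 1 ≤ N) (α β : ℝ) (hα : 0 < α) (hβ : 0 < β)
    (hαβ : α + β < N) (x : EuclideanSpace ℝ (Fin N)) (hx : x ≠ 0) :
    ∫ y, rieszKernel N α (x - y) * rieszKernel N β y = rieszKernel N (α + β) x :=
  stmt9_general N α β hα hβ hαβ x hx
end
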